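/- arXiv:1103.4007 — 2 statements merged into one kernel-verified Lean document; each statement's English description precedes it below -/
import Mathlib

section
/- Let Γ, α₀, α₁ ∈ [0,1] and let (A, X₁, X₂, S, Y, Z) be {0,1}-valued random variables with joint distribution specified by: P(A=1) = Γ; X₁ is uniform on {0,1} and independent of A; conditionally on (A, X₁), X₂ = X₁ with probability α_A and X₂ = 1 - X₁ with probability 1 - α_A; S is uniform on {0,1} and independent of (A, X₁, X₂); Y = X₁ if S = 0 and Y = X₂ if S = 1; and Z = X₁ if A = 1, Z = 0 if A = 0. Then I(X₁; Y | X₂, Z, A) = (1 - Γ)·(H_b((1+α₀)/2) + α₀ - 1), where H_b(p) = -p·log₂ p - (1-p)·log₂(1-p) and all information quantities are computed in bits (logarithm base 2). -/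
open Finset

/-- Probability that `X` takes the value `b`, under the pmf `p` on the finite sample
space `Ω`. -/
noncomputable def prob {Ω β : Type*} [Fintype Ω] (p : Ω → ℝ) (X : Ω → β) (b : β) : ℝ :=
  haveI := Classical.propDecidable
  ∑ ω, if X ω = b then p ω else 0

/-- Shannon entropy `H(X)` in bits (logarithm base 2). -/
noncomputable def ent2 {Ω β : Type*} [Fintype Ω] [Fintype β] (p : Ω → ℝ) (X : Ω → β) : ℝ :=
  -∑ b, prob p X b * Real.logb 2 (prob p X b)

/-- Conditional entropy `H(X|Y) = H(X,Y) - H(Y)` in bits. -/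
noncomputable def condEnt2 {Ω β γ : Type*} [Fintype Ω] [Fintype β] [Fintype γ]
    (p : Ω → ℝ) (X : Ω → β) (Y : Ω → γ) : ℝ :=
  ent2 p (fun ω => (X ω, Y ω)) - ent2 p Y

/-- Mutual information `I(X;Y) = H(X) + H(Y) - H(X,Y)` in bits. -/
noncomputable def mutInf2 {Ω β γ : Type*} [Fintype Ω] [Fintype β] [Fintype γ]
    (p : Ω → ℝ) (X : Ω → β) (Y : Ω → γ) : ℝ :=
  ent2 p X + ent2 p Y - ent2 p (fun ω => (X ω, Y ω))

/-- Conditional mutual information `I(X;Y|Z) = H(X|Z) + H(Y|Z) - H(X,Y|Z)` in bits. -/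
noncomputable def condMutInf2 {Ω β γ δ : Type*} [Fintype Ω] [Fintype β] [Fintype γ] [Fintype δ]
    (p : Ω → ℝ) (X : Ω → β) (Y : Ω → γ) (Z : Ω → δ) : ℝ :=
  condEnt2 p X Z + condEnt2 p Y Z - condEnt2 p (fun ω => (X ω, Y ω)) Z

/-- The joint pmf of `(A, X₁, X₂, S)` in the deterministic relay-with-actions example:
`P(A=1) = Γ`; `X₁` is uniform on `{0,1}` and independent of `A`; given `(A, X₁)`,
`X₂ = X₁` with probability `α_A` (`α₁` if `A = 1`, `α₀` if `A = 0`) and `X₂ = 1 - X₁`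
otherwise; `S` is uniform on `{0,1}` and independent of `(A, X₁, X₂)`.
A sample point is `ω = (a, x₁, x₂, s)` with `true` playing the role of `1`. -/
noncomputable def relayP (Γ α₀ α₁ : ℝ) : Bool × Bool × Bool × Bool → ℝ :=
  fun ω =>
    (if ω.1 then Γ else 1 - Γ) * (1 / 2) *
      (if ω.2.2.1 = ω.2.1 then (if ω.1 then α₁ else α₀) else 1 - (if ω.1 then α₁ else α₀)) *
      (1 / 2)

/-- The action `A`. -/
def act (ω : Bool × Bool × Bool × Bool) : Bool := ω.1

/-- The input `X₁` of Encoder 1. -/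
def inp1 (ω : Bool × Bool × Bool × Bool) : Bool := ω.2.1

/-- The input `X₂` of Encoder 2 (the relay). -/
def inp2 (ω : Bool × Bool × Bool × Bool) : Bool := ω.2.2.1

/-- The channel output `Y`: equal to `X₁` if the switch `S = 0` and to `X₂` if `S = 1`. -/
def outY (ω : Bool × Bool × Bool × Bool) : Bool := if ω.2.2.2 then ω.2.2.1 else ω.2.1

/-- The cribbed signal `Z`: equal to `X₁` if `A = 1` and constant (`0`) if `A = 0`. -/
def cribZ (ω : Bool × Bool × Bool × Bool) : Bool := if ω.1 then ω.2.1 else false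

/-- The binary entropy function in base 2, `H_b(p) = -p·log₂ p - (1-p)·log₂(1-p)`,
with the convention `0·log₂ 0 = 0`. -/
noncomputable def binEnt (p : ℝ) : ℝ := -p * Real.logb 2 p - (1 - p) * Real.logb 2 (1 - p)

/-!
Write `I(X₁; Y | W) = H(Y | W) - H(Y | X₁, W)` with `W = (X₂, Z, A)`. For a binary `Y`,
`H(Y | V) = ∑ v, P(V = v) · H_b(P(Y = 1 | V = v))`, by the grouping identity
`η(m q) + η(m (1 - q)) - η(m) = m (η q + η (1 - q))` for `η x = -x log x`, which holds for all
real `m, q`. Since `Y` is `X₁` or `X₂` with probability `1/2` each, `P(Y = 1 | V)` is the average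
of `P(X₁ = 1 | V)` and `P(X₂ = 1 | V)`. Given `X₁` this is `0`, `1/2` or `1`; given `W` only
the case `A = 0` differs, where `X₁` is hidden and `P(Y = 1 | X₂) = (1 ± α₀) / 2`.
-/

open Real

lemma ent2_eq_sum_negMulLog {Ω β : Type*} [Fintype Ω] [Fintype β] (p : Ω → ℝ) (X : Ω → β) :
    ent2 p X = (∑ b, negMulLog (prob p X b)) / log 2 := by
  simp only [ent2, negMulLog, logb, Finset.sum_div, ← Finset.sum_neg_distrib]
  congr 1 with b
  ring

lemma ent2_comp_equiv {Ω β γ : Type*} [Fintype Ω] [Fintype β] [Fintype γ] (p : Ω → ℝ)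
    (X : Ω → β) (e : β ≃ γ) : ent2 p (fun ω => e (X ω)) = ent2 p X := by
  have hprob : ∀ b, prob p (fun ω => e (X ω)) (e b) = prob p X b := by
    intro b
    unfold prob
    congr 1 with ω
    by_cases h : X ω = b <;> simp [h]
  simp only [ent2, ← e.sum_comp, hprob]

lemma sum_prob_pair {Ω γ δ : Type*} [Fintype Ω] [Fintype γ] (p : Ω → ℝ)
    (Y : Ω → γ) (W : Ω → δ) (w : δ) :
    ∑ y, prob p (fun ω => (Y ω, W ω)) (y, w) = prob p W w := by
  unfold prob
  rw [Finset.sum_comm]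
  congr 1 with ω
  classical
  by_cases h : W ω = w <;> simp [h]

lemma binEnt_mul_log_two (q : ℝ) : binEnt q * log 2 = negMulLog q + negMulLog (1 - q) := by
  have : log 2 ≠ 0 := by positivity
  simp only [binEnt, negMulLog, logb]
  field_simp
  ring

lemma negMulLog_mul_add_negMulLog_mul_one_sub (m q : ℝ) :
    negMulLog (m * q) + negMulLog (m * (1 - q)) - negMulLog m = m * (binEnt q * log 2) := by
  rw [binEnt_mul_log_two, negMulLog_mul, negMulLog_mul]
  ring

lemma condEnt2_bool_eq_sum {Ω δ : Type*} [Fintype Ω] [Fintype δ] (p : Ω → ℝ)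
    (Y : Ω → Bool) (W : Ω → δ) (q : δ → ℝ)
    (hq : ∀ w, prob p (fun ω => (Y ω, W ω)) (true, w) = prob p W w * q w) :
    condEnt2 p Y W = ∑ w, prob p W w * binEnt (q w) := by
  have hq' : ∀ w, prob p (fun ω => (Y ω, W ω)) (false, w) = prob p W w * (1 - q w) := by
    intro w
    rw [mul_one_sub, ← hq, ← sum_prob_pair p Y W w, Fintype.sum_bool]
    ring
  have hlog : log 2 ≠ 0 := by positivity
  rw [condEnt2, ent2_eq_sum_negMulLog, ent2_eq_sum_negMulLog, ← sub_div,
    Fintype.sum_prod_type, Fintype.sum_bool, div_eq_iff hlog, Finset.sum_mul]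
  simp only [hq, hq']
  rw [← Finset.sum_add_distrib, ← Finset.sum_sub_distrib]
  simp only [negMulLog_mul_add_negMulLog_mul_one_sub, mul_assoc]

lemma condMutInf2_eq_condEnt2_sub_condEnt2 {Ω β γ δ : Type*} [Fintype Ω] [Fintype β]
    [Fintype γ] [Fintype δ] (p : Ω → ℝ) (X : Ω → β) (Y : Ω → γ) (W : Ω → δ) :
    condMutInf2 p X Y W = condEnt2 p Y W - condEnt2 p Y (fun ω => (X ω, W ω)) := by
  have hswap : ent2 p (fun ω => ((X ω, Y ω), W ω)) = ent2 p (fun ω => (Y ω, X ω, W ω)) :=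
    (ent2_comp_equiv p _ (((Equiv.prodComm β γ).prodCongr (Equiv.refl δ)).trans
      (Equiv.prodAssoc γ β δ))).symm
  rw [condMutInf2, condEnt2, condEnt2, condEnt2, condEnt2, hswap]
  ring

@[simp] lemma binEnt_zero : binEnt 0 = 0 := by simp [binEnt]

@[simp] lemma binEnt_one : binEnt 1 = 0 := by simp [binEnt]

@[simp] lemma binEnt_half : binEnt (1 / 2) = 1 := by
  have h : logb 2 (1 / 2) = -1 := by
    rw [one_div, logb_inv, logb_self_eq_one one_lt_two]
  rw [binEnt, show (1 : ℝ) - 1 / 2 = 1 / 2 by norm_num, h]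
  ring

lemma binEnt_one_sub (q : ℝ) : binEnt (1 - q) = binEnt q := by
  simp only [binEnt, sub_sub_cancel]
  ring

lemma relay_condEnt2_outY_inp2_cribZ_act (Γ α₀ α₁ : ℝ) :
    condEnt2 (relayP Γ α₀ α₁) outY (fun ω => (inp2 ω, cribZ ω, act ω))
      = Γ * (1 - α₁) + (1 - Γ) * binEnt ((1 + α₀) / 2) := by
  -- `P(Y = 1 | X₂, Z, A)`; when `A = 1` the crib `Z` is `X₁`
  rw [condEnt2_bool_eq_sum _ _ _ fun w => ((if w.2.2 then (if w.2.1 then 1 else 0)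
      else (if w.1 then α₀ else 1 - α₀)) + (if w.1 then 1 else 0)) / 2]
  · simp only [prob, relayP, act, inp2, cribZ, Fintype.sum_prod_type, Fintype.sum_bool]
    norm_num
    rw [show (1 - α₀) / 2 = 1 - (1 + α₀) / 2 by ring, binEnt_one_sub, add_comm α₀ 1]
    ring
  · rintro ⟨x₂, z, a⟩
    cases x₂ <;> cases z <;> cases a <;>
      simp only [prob, relayP, act, inp2, outY, cribZ, Fintype.sum_prod_type,
        Fintype.sum_bool, Prod.mk.injEq, Bool.true_eq_false, Bool.false_eq_true, and_true,
        and_false, true_and, false_and, ↓reduceIte, add_zero, zero_add] <;>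
      ring

lemma relay_condEnt2_outY_inp1_inp2_cribZ_act (Γ α₀ α₁ : ℝ) :
    condEnt2 (relayP Γ α₀ α₁) outY (fun ω => (inp1 ω, inp2 ω, cribZ ω, act ω))
      = Γ * (1 - α₁) + (1 - Γ) * (1 - α₀) := by
  rw [condEnt2_bool_eq_sum _ _ _ fun w =>
      ((if w.1 then 1 else 0) + (if w.2.1 then 1 else 0)) / 2]
  · simp only [prob, relayP, act, inp1, inp2, cribZ, Fintype.sum_prod_type, Fintype.sum_bool]
    norm_num
    ring
  · rintro ⟨x₁, x₂, z, a⟩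
    cases x₁ <;> cases x₂ <;> cases z <;> cases a <;>
      simp only [prob, relayP, act, inp1, inp2, outY, cribZ, Fintype.sum_prod_type,
        Fintype.sum_bool, Prod.mk.injEq, Bool.true_eq_false, Bool.false_eq_true, and_true,
        and_false, true_and, false_and, ↓reduceIte, add_zero, zero_add] <;>
      ring

theorem relay_condMutInf_general (Γ α₀ α₁ : ℝ) :
    condMutInf2 (relayP Γ α₀ α₁) inp1 outY (fun ω => (inp2 ω, cribZ ω, act ω))
      = (1 - Γ) * (binEnt ((1 + α₀) / 2) + α₀ - 1) := by
  rw [condMutInf2_eq_condEnt2_sub_condEnt2, relay_condEnt2_outY_inp2_cribZ_act,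
    relay_condEnt2_outY_inp1_inp2_cribZ_act]
  ring

/-- In the deterministic relay-with-actions example,
`I(X₁; Y | X₂, Z, A) = (1 - Γ)·(H_b((1+α₀)/2) + α₀ - 1)` (in bits). -/
theorem relay_condMutInf (Γ α₀ α₁ : ℝ)
    (hΓ : Γ ∈ Set.Icc (0 : ℝ) 1) (hα₀ : α₀ ∈ Set.Icc (0 : ℝ) 1)
    (hα₁ : α₁ ∈ Set.Icc (0 : ℝ) 1) :
    condMutInf2 (relayP Γ α₀ α₁) inp1 outY (fun ω => (inp2 ω, cribZ ω, act ω))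
      = (1 - Γ) * (binEnt ((1 + α₀) / 2) + α₀ - 1) :=
  relay_condMutInf_general Γ α₀ α₁
end

section
/- Let (U, A, Z, X₁, X₂, Y) be a random vector taking values in a product of nonempty finite sets such that: (i) Z = g(A, X₁) almost surely for a deterministic function g; (ii) X₂ is conditionally independent of (X₁, Z) given (U, A); (iii) Y is conditionally independent of (U, A) given (X₁, X₂). Then H(Z | U, A) + I(X₁; Y | X₂, Z, U, A) ≤ H(Z | A, X₂) + I(X₁; Y | X₂, Z, A). -/
open Finset

/-- Shannon entropy `H(X)` (natural logarithm; any fixed base may be used). -/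
noncomputable def ent {Ω β : Type*} [Fintype Ω] [Fintype β] (p : Ω → ℝ) (X : Ω → β) : ℝ :=
  -∑ b, prob p X b * Real.log (prob p X b)

/-- Conditional entropy `H(X|Y) = H(X,Y) - H(Y)`. -/
noncomputable def condEnt {Ω β γ : Type*} [Fintype Ω] [Fintype β] [Fintype γ]
    (p : Ω → ℝ) (X : Ω → β) (Y : Ω → γ) : ℝ :=
  ent p (fun ω => (X ω, Y ω)) - ent p Y

/-- Mutual information `I(X;Y) = H(X) + H(Y) - H(X,Y)`. -/
noncomputable def mutInf {Ω β γ : Type*} [Fintype Ω] [Fintype β] [Fintype γ]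
    (p : Ω → ℝ) (X : Ω → β) (Y : Ω → γ) : ℝ :=
  ent p X + ent p Y - ent p (fun ω => (X ω, Y ω))

/-- Conditional mutual information `I(X;Y|Z) = H(X|Z) + H(Y|Z) - H(X,Y|Z)`. -/
noncomputable def condMutInf {Ω β γ δ : Type*} [Fintype Ω] [Fintype β] [Fintype γ] [Fintype δ]
    (p : Ω → ℝ) (X : Ω → β) (Y : Ω → γ) (Z : Ω → δ) : ℝ :=
  condEnt p X Z + condEnt p Y Z - condEnt p (fun ω => (X ω, Y ω)) Z

/-- `X` is conditionally independent of `Y` given `Z` (under the pmf `p`):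
`P(X=x, Y=y, Z=z)·P(Z=z) = P(X=x, Z=z)·P(Y=y, Z=z)` for all `x, y, z`. -/
def CondIndepFun {Ω β γ δ : Type*} [Fintype Ω]
    (p : Ω → ℝ) (X : Ω → β) (Y : Ω → γ) (Z : Ω → δ) : Prop :=
  ∀ (x : β) (y : γ) (z : δ),
    prob p (fun ω => (X ω, Y ω, Z ω)) (x, y, z) * prob p Z z
      = prob p (fun ω => (X ω, Z ω)) (x, z) * prob p (fun ω => (Y ω, Z ω)) (y, z)

/-!
Write `I(X₁;Y|W) = H(Y|W) - H(Y|X₁,W)`. Since `Z` is a function of `(A, X₁)`, conditioning on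
`(X₁, X₂, Z, U, A)` is conditioning on `((U, A), (X₁, X₂))`, and the Markov chain
`(U, A) – (X₁, X₂) – Y` gives `H(Y|X₁,X₂,Z,U,A) = H(Y|X₁,X₂) = H(Y|X₁,X₂,Z,A)`, so the subtracted
terms on both sides agree. As `X₂ ⊥ Z | (U, A)`, `H(Z|U,A) = H(Z|X₂,U,A)`. What remains is
conditioning reducing entropy twice: `H(Z|X₂,U,A) ≤ H(Z|A,X₂)` and `H(Y|X₂,Z,U,A) ≤ H(Y|X₂,Z,A)`.
That in turn is `I(X;Y|W) ≥ 0`, a relative entropy, nonnegative by `log t ≥ 1 - 1/t`.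
-/

open Real

section Entropy

variable {Ω β γ γ' δ : Type*} [Fintype Ω] {p : Ω → ℝ}

lemma prob_nonneg (hp0 : ∀ ω, 0 ≤ p ω) (X : Ω → β) (b : β) : 0 ≤ prob p X b :=
  Finset.sum_nonneg fun ω _ => by split_ifs <;> simp [hp0 ω]

lemma prob_le_prob_comp (hp0 : ∀ ω, 0 ≤ p ω) (X : Ω → β) (f : β → γ) (b : β) :
    prob p X b ≤ prob p (fun ω => f (X ω)) (f b) :=
  Finset.sum_le_sum fun ω _ => by
    by_cases h : X ω = b
    · simp [h]
    · simp only [h, if_false]; split_ifs <;> simp [hp0 ω]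

lemma prob_apply_self_pos (hp0 : ∀ ω, 0 ≤ p ω) {ω : Ω} (hω : 0 < p ω) (X : Ω → β) :
    0 < prob p X (X ω) := by
  classical
  refine hω.trans_le ?_
  simpa [prob] using Finset.single_le_sum (f := fun ω' => if X ω' = X ω then p ω' else 0)
    (fun ω' _ => by split_ifs <;> simp [hp0 ω']) (Finset.mem_univ ω)

lemma sum_prob_mul [Fintype β] (X : Ω → β) (L : β → ℝ) :
    ∑ b, prob p X b * L b = ∑ ω, p ω * L (X ω) := by
  classical
  simp only [prob, Finset.sum_mul, ite_mul, zero_mul]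
  rw [Finset.sum_comm]
  simp

lemma sum_prob_pair_fst [Fintype β] (X : Ω → β) (W : Ω → δ) (w : δ) :
    ∑ x, prob p (fun ω => (X ω, W ω)) (x, w) = prob p W w := by
  classical
  simp only [prob]
  rw [Finset.sum_comm]
  simp [Prod.ext_iff, ite_and]

lemma prob_congr {β' : Type*} {X : Ω → β} {X' : Ω → β'} {b : β} {b' : β'}
    (h : ∀ ω, p ω ≠ 0 → (X ω = b ↔ X' ω = b')) : prob p X b = prob p X' b' := by
  classical
  refine Finset.sum_congr rfl fun ω _ => ?_
  by_cases hω : p ω = 0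
  · simp [hω]
  · exact if_congr (h ω hω) rfl rfl

lemma sum_prob [Fintype β] (X : Ω → β) : ∑ b, prob p X b = ∑ ω, p ω := by
  simpa using sum_prob_mul (p := p) X fun _ => (1 : ℝ)

lemma sum_prob_mul_prob_div_prob [Fintype β] [Fintype γ] [Fintype δ] (X : Ω → β) (Y : Ω → γ)
    (W : Ω → δ) :
    ∑ t : (β × γ) × δ, prob p (fun ω => (X ω, W ω)) (t.1.1, t.2)
        * prob p (fun ω => (Y ω, W ω)) (t.1.2, t.2) / prob p W t.2 = ∑ ω, p ω := by
  rw [← sum_prob W, Fintype.sum_prod_type, Finset.sum_comm]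
  refine Finset.sum_congr rfl fun w _ => ?_
  rw [Fintype.sum_prod_type]
  simp only [← Finset.sum_div, ← Finset.mul_sum, ← Finset.sum_mul, sum_prob_pair_fst]
  -- `x * x / x = x` holds at `x = 0` too, so `P(w) = 0` needs no separate case
  exact mul_self_div_self _

lemma ent_eq_sum [Fintype β] (X : Ω → β) : ent p X = -∑ ω, p ω * log (prob p X (X ω)) := by
  rw [ent, sum_prob_mul X fun b => log (prob p X b)]

lemma ent_eq_of_determines {β' : Type*} [Fintype β] [Fintype β'] {X : Ω → β} {X' : Ω → β'}
    (f : β → β') (g : β' → β) (hf : ∀ ω, p ω ≠ 0 → X' ω = f (X ω))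
    (hg : ∀ ω, p ω ≠ 0 → X ω = g (X' ω)) : ent p X = ent p X' := by
  simp only [ent_eq_sum, neg_inj]
  refine Finset.sum_congr rfl fun ω _ => ?_
  by_cases hω : p ω = 0
  · simp [hω]
  · rw [prob_congr fun ω' hω' => ⟨fun h => ?_, fun h => ?_⟩]
    · rw [hf ω' hω', h, ← hf ω hω]
    · rw [hg ω' hω', h, ← hg ω hω]

lemma condEnt_eq_of_determines {δ' : Type*} [Fintype β] [Fintype δ] [Fintype δ']
    (X : Ω → β) {W : Ω → δ} {W' : Ω → δ'} (f : δ → δ') (g : δ' → δ)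
    (hf : ∀ ω, p ω ≠ 0 → W' ω = f (W ω)) (hg : ∀ ω, p ω ≠ 0 → W ω = g (W' ω)) :
    condEnt p X W = condEnt p X W' := by
  rw [condEnt, condEnt, ent_eq_of_determines f g hf hg,
    ent_eq_of_determines (X := fun ω => (X ω, W ω)) (X' := fun ω => (X ω, W' ω))
      (Prod.map id f) (Prod.map id g) (fun ω hω => by simp [hf ω hω])
      (fun ω hω => by simp [hg ω hω])]

lemma condMutInf_eq_sum [Fintype β] [Fintype γ] [Fintype δ] (X : Ω → β) (Y : Ω → γ)
    (W : Ω → δ) :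
    condMutInf p X Y W = ∑ ω, p ω *
      (log (prob p (fun ω => ((X ω, Y ω), W ω)) ((X ω, Y ω), W ω)) + log (prob p W (W ω))
        - log (prob p (fun ω => (X ω, W ω)) (X ω, W ω))
        - log (prob p (fun ω => (Y ω, W ω)) (Y ω, W ω))) := by
  simp only [condMutInf, condEnt, ent_eq_sum, mul_add, mul_sub, Finset.sum_add_distrib,
    Finset.sum_sub_distrib]
  ring

lemma CondIndepFun.condMutInf_eq_zero [Fintype β] [Fintype γ] [Fintype δ]
    (hp0 : ∀ ω, 0 ≤ p ω) {X : Ω → β} {Y : Ω → γ} {W : Ω → δ}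
    (h : CondIndepFun p X Y W) : condMutInf p X Y W = 0 := by
  rw [condMutInf_eq_sum]
  refine Finset.sum_eq_zero fun ω _ => ?_
  rcases (hp0 ω).eq_or_lt with hω | hω
  · simp [← hω]
  have hprod := h (X ω) (Y ω) (W ω)
  rw [← prob_congr (X := fun ω => ((X ω, Y ω), W ω)) (b := ((X ω, Y ω), W ω))
    fun _ _ => by simp [and_assoc]] at hprod
  have log_eq : ∀ {a b c d : ℝ}, a ≠ 0 → b ≠ 0 → c ≠ 0 → d ≠ 0 → a * b = c * d →
      log a + log b - log c - log d = 0 := by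
    intro a b c d ha hb hc hd habcd
    rw [← log_mul ha hb, habcd, log_mul hc hd]
    ring
  exact mul_eq_zero_of_right _ (log_eq (prob_apply_self_pos hp0 hω _).ne'
    (prob_apply_self_pos hp0 hω _).ne' (prob_apply_self_pos hp0 hω _).ne'
    (prob_apply_self_pos hp0 hω _).ne' hprod)

lemma sub_le_mul_log_sub_log {a q : ℝ} (ha : 0 < a) (hq : 0 < q) :
    a - q ≤ a * (log a - log q) := by
  have h := one_sub_inv_le_log_of_pos (div_pos ha hq)
  rw [log_div ha.ne' hq.ne', inv_div] at h
  calc a - q = a * (1 - q / a) := by field_simp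
    _ ≤ a * (log a - log q) := mul_le_mul_of_nonneg_left h ha.le

lemma condMutInf_nonneg [Fintype β] [Fintype γ] [Fintype δ] (hp0 : ∀ ω, 0 ≤ p ω)
    (X : Ω → β) (Y : Ω → γ) (W : Ω → δ) : 0 ≤ condMutInf p X Y W := by
  set P := prob p (fun ω => ((X ω, Y ω), W ω))
  set PXW := prob p (fun ω => (X ω, W ω))
  set PYW := prob p (fun ω => (Y ω, W ω))
  set PW := prob p W
  -- `I(X;Y|W)` is the relative entropy of `P` with respect to `Q`
  set Q : (β × γ) × δ → ℝ := fun t => PXW (t.1.1, t.2) * PYW (t.1.2, t.2) / PW t.2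
  have hsum : condMutInf p X Y W = ∑ t, P t *
      (log (P t) + log (PW t.2) - log (PXW (t.1.1, t.2)) - log (PYW (t.1.2, t.2))) := by
    rw [condMutInf_eq_sum, sum_prob_mul]
  have hterm : ∀ t, P t - Q t ≤ P t *
      (log (P t) + log (PW t.2) - log (PXW (t.1.1, t.2)) - log (PYW (t.1.2, t.2))) := by
    intro t
    have hP0 : 0 ≤ P t := prob_nonneg hp0 _ t
    rcases hP0.eq_or_lt with ht | ht
    · rw [← ht, zero_sub, zero_mul, neg_nonpos]
      exact div_nonneg (mul_nonneg (prob_nonneg hp0 _ _) (prob_nonneg hp0 _ _))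
        (prob_nonneg hp0 _ _)
    have hXW : 0 < PXW (t.1.1, t.2) :=
      ht.trans_le (prob_le_prob_comp hp0 (fun ω => ((X ω, Y ω), W ω)) (fun s => (s.1.1, s.2)) t)
    have hYW : 0 < PYW (t.1.2, t.2) :=
      ht.trans_le (prob_le_prob_comp hp0 (fun ω => ((X ω, Y ω), W ω)) (fun s => (s.1.2, s.2)) t)
    have hW : 0 < PW t.2 :=
      ht.trans_le (prob_le_prob_comp hp0 (fun ω => ((X ω, Y ω), W ω)) Prod.snd t)
    have hQ : log (Q t) = log (PXW (t.1.1, t.2)) + log (PYW (t.1.2, t.2)) - log (PW t.2) := by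
      rw [log_div (mul_pos hXW hYW).ne' hW.ne', log_mul hXW.ne' hYW.ne']
    have := sub_le_mul_log_sub_log ht (div_pos (mul_pos hXW hYW) hW)
    rw [hQ] at this
    linarith
  calc 0 = ∑ t, (P t - Q t) := by
        rw [Finset.sum_sub_distrib, sum_prob_mul_prob_div_prob, sum_prob, sub_self]
    _ ≤ _ := Finset.sum_le_sum fun t _ => hterm t
    _ = condMutInf p X Y W := hsum.symm

lemma prob_comp_mid_eq_sum [Fintype γ] [DecidableEq γ'] (X : Ω → β) (Y : Ω → γ) (W : Ω → δ)
    (f : γ → γ') (x : β) (c : γ') (w : δ) :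
    prob p (fun ω => (X ω, f (Y ω), W ω)) (x, c, w)
      = ∑ y ∈ Finset.univ.filter (f · = c), prob p (fun ω => (X ω, Y ω, W ω)) (x, y, w) := by
  classical
  simp only [prob]
  rw [Finset.sum_comm]
  refine Finset.sum_congr rfl fun ω _ => ?_
  rw [Finset.sum_filter,
    Finset.sum_eq_single (Y ω) (fun y _ hy => by simp [Ne.symm hy]) (by simp)]
  simp only [Prod.mk.injEq, true_and]
  split_ifs <;> tauto

lemma CondIndepFun.comp_right [Fintype β] [Fintype γ] {X : Ω → β} {Y : Ω → γ} {W : Ω → δ}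
    (h : CondIndepFun p X Y W) (f : γ → γ') : CondIndepFun p X (fun ω => f (Y ω)) W := by
  classical
  intro x c w
  have hpair : prob p (fun ω => (f (Y ω), W ω)) (c, w)
      = ∑ y ∈ Finset.univ.filter (f · = c), prob p (fun ω => (Y ω, W ω)) (y, w) := by
    rw [← sum_prob_pair_fst X (fun ω => (f (Y ω), W ω)) (c, w)]
    simp only [prob_comp_mid_eq_sum X Y W f]
    rw [Finset.sum_comm]
    simp only [sum_prob_pair_fst]
  rw [prob_comp_mid_eq_sum, hpair, Finset.sum_mul, Finset.mul_sum]
  exact Finset.sum_congr rfl fun y _ => h x y w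

lemma CondIndepFun.symm {X : Ω → β} {Y : Ω → γ} {W : Ω → δ} (h : CondIndepFun p X Y W) :
    CondIndepFun p Y X W := fun y x w =>
  calc prob p (fun ω => (Y ω, X ω, W ω)) (y, x, w) * prob p W w
      = prob p (fun ω => (X ω, Y ω, W ω)) (x, y, w) * prob p W w := by
        rw [prob_congr (X' := fun ω => (X ω, Y ω, W ω)) (b' := (x, y, w))
          fun _ _ => by simp only [Prod.mk.injEq]; tauto]
    _ = _ := h x y w
    _ = _ := mul_comm _ _

lemma condMutInf_eq_condEnt_sub_condEnt [Fintype β] [Fintype γ] [Fintype δ] (X : Ω → β)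
    (Y : Ω → γ) (W : Ω → δ) :
    condMutInf p X Y W = condEnt p Y W - condEnt p Y (fun ω => (X ω, W ω)) := by
  have hswap : ent p (fun ω => ((X ω, Y ω), W ω)) = ent p (fun ω => (Y ω, X ω, W ω)) :=
    ent_eq_of_determines (fun t => (t.1.2, t.1.1, t.2)) (fun t => ((t.2.1, t.1), t.2.2))
      (fun _ _ => rfl) (fun _ _ => rfl)
  simp only [condMutInf, condEnt, hswap]
  ring

lemma CondIndepFun.condEnt_pair_eq [Fintype β] [Fintype γ] [Fintype δ] (hp0 : ∀ ω, 0 ≤ p ω)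
    {X : Ω → β} {Y : Ω → γ} {W : Ω → δ} (h : CondIndepFun p X Y W) :
    condEnt p Y (fun ω => (X ω, W ω)) = condEnt p Y W := by
  linarith [condMutInf_eq_condEnt_sub_condEnt (p := p) X Y W, h.condMutInf_eq_zero hp0]

lemma condEnt_pair_le [Fintype β] [Fintype γ] [Fintype δ] (hp0 : ∀ ω, 0 ≤ p ω)
    (X : Ω → β) (Y : Ω → γ) (W : Ω → δ) :
    condEnt p Y (fun ω => (X ω, W ω)) ≤ condEnt p Y W := by
  linarith [condMutInf_eq_condEnt_sub_condEnt (p := p) X Y W, condMutInf_nonneg hp0 X Y W]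

lemma condEnt_le_condEnt_of_comp [Fintype β] [Fintype γ] [Fintype δ] (hp0 : ∀ ω, 0 ≤ p ω)
    (X : Ω → β) {W : Ω → γ} {W' : Ω → δ} (f : γ → δ) (h : ∀ ω, p ω ≠ 0 → W' ω = f (W ω)) :
    condEnt p X W ≤ condEnt p X W' :=
  calc condEnt p X W = condEnt p X (fun ω => (W ω, W' ω)) :=
        condEnt_eq_of_determines X (fun w => (w, f w)) Prod.fst
          (fun ω hω => by rw [h ω hω]) (fun _ _ => rfl)
    _ ≤ condEnt p X W' := condEnt_pair_le hp0 W X W'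

end Entropy

theorem condEnt_add_condMutInf_le_of_condIndepFun {Ω υ α ζ ξ₁ ξ₂ η : Type*} [Fintype Ω]
    [Fintype υ] [Fintype α] [Fintype ζ] [Fintype ξ₁] [Fintype ξ₂] [Fintype η]
    {p : Ω → ℝ} (hp0 : ∀ ω, 0 ≤ p ω)
    {U : Ω → υ} {A : Ω → α} {Z : Ω → ζ} {X₁ : Ω → ξ₁} {X₂ : Ω → ξ₂} {Y : Ω → η}
    (g : α → ξ₁ → ζ) (hdet : ∀ ω, p ω ≠ 0 → Z ω = g (A ω) (X₁ ω))
    (hci1 : CondIndepFun p X₂ (fun ω => (X₁ ω, Z ω)) (fun ω => (U ω, A ω)))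
    (hci2 : CondIndepFun p Y (fun ω => (U ω, A ω)) (fun ω => (X₁ ω, X₂ ω))) :
    condEnt p Z (fun ω => (U ω, A ω))
        + condMutInf p X₁ Y (fun ω => (X₂ ω, Z ω, U ω, A ω))
      ≤ condEnt p Z (fun ω => (A ω, X₂ ω))
        + condMutInf p X₁ Y (fun ω => (X₂ ω, Z ω, A ω)) := by
  have hZ : condEnt p Z (fun ω => (X₂ ω, U ω, A ω)) = condEnt p Z (fun ω => (U ω, A ω)) :=
    (hci1.comp_right Prod.snd).condEnt_pair_eq hp0
  have hYU : condEnt p Y (fun ω => (X₁ ω, X₂ ω, Z ω, U ω, A ω))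
      = condEnt p Y (fun ω => (X₁ ω, X₂ ω)) :=
    (condEnt_eq_of_determines Y (W' := fun ω => ((U ω, A ω), X₁ ω, X₂ ω))
        (fun ⟨x₁, x₂, _, u, a⟩ => ((u, a), x₁, x₂))
        (fun ⟨(u, a), x₁, x₂⟩ => (x₁, x₂, g a x₁, u, a)) (fun _ _ => rfl)
        (fun ω hω => by rw [hdet ω hω])).trans
      (hci2.symm.condEnt_pair_eq hp0)
  have hYA : condEnt p Y (fun ω => (X₁ ω, X₂ ω, Z ω, A ω))
      = condEnt p Y (fun ω => (X₁ ω, X₂ ω)) :=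
    (condEnt_eq_of_determines Y (W' := fun ω => (A ω, X₁ ω, X₂ ω))
        (fun ⟨x₁, x₂, _, a⟩ => (a, x₁, x₂))
        (fun ⟨a, x₁, x₂⟩ => (x₁, x₂, g a x₁, a)) (fun _ _ => rfl)
        (fun ω hω => by rw [hdet ω hω])).trans
      ((hci2.comp_right Prod.snd).symm.condEnt_pair_eq hp0)
  have hmonoZ : condEnt p Z (fun ω => (X₂ ω, U ω, A ω)) ≤ condEnt p Z (fun ω => (A ω, X₂ ω)) :=
    condEnt_le_condEnt_of_comp hp0 Z (fun ⟨x₂, _, a⟩ => (a, x₂)) fun _ _ => rfl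
  have hmonoY : condEnt p Y (fun ω => (X₂ ω, Z ω, U ω, A ω))
      ≤ condEnt p Y (fun ω => (X₂ ω, Z ω, A ω)) :=
    condEnt_le_condEnt_of_comp hp0 Y (fun ⟨x₂, z, _, a⟩ => (x₂, z, a)) fun _ _ => rfl
  rw [condMutInf_eq_condEnt_sub_condEnt, condMutInf_eq_condEnt_sub_condEnt, ← hZ, hYU, hYA]
  linarith

theorem condEnt_add_condMutInf_le_actions_general
    {U A Z X₁ X₂ Y : Type*}
    [Fintype U] [Fintype A] [Fintype Z] [Fintype X₁] [Fintype X₂] [Fintype Y]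
    (p : U × A × Z × X₁ × X₂ × Y → ℝ)
    (hp0 : ∀ ω, 0 ≤ p ω)
    (g : A → X₁ → Z)
    (hdet : ∀ ω, p ω ≠ 0 → ω.2.2.1 = g ω.2.1 ω.2.2.2.1)
    (hci1 : CondIndepFun p (fun ω => ω.2.2.2.2.1)
      (fun ω => (ω.2.2.2.1, ω.2.2.1)) (fun ω => (ω.1, ω.2.1)))
    (hci2 : CondIndepFun p (fun ω => ω.2.2.2.2.2)
      (fun ω => (ω.1, ω.2.1)) (fun ω => (ω.2.2.2.1, ω.2.2.2.2.1))) :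
    condEnt p (fun ω => ω.2.2.1) (fun ω => (ω.1, ω.2.1))
        + condMutInf p (fun ω => ω.2.2.2.1) (fun ω => ω.2.2.2.2.2)
            (fun ω => (ω.2.2.2.2.1, ω.2.2.1, ω.1, ω.2.1))
      ≤ condEnt p (fun ω => ω.2.2.1) (fun ω => (ω.2.1, ω.2.2.2.2.1))
        + condMutInf p (fun ω => ω.2.2.2.1) (fun ω => ω.2.2.2.2.2)
            (fun ω => (ω.2.2.2.2.1, ω.2.2.1, ω.2.1)) :=
  condEnt_add_condMutInf_le_of_condIndepFun hp0 g hdet hci1 hci2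

/-- For a random vector `(U, A, Z, X₁, X₂, Y)` over finite sets with
(i) `Z = g(A, X₁)` a.s., (ii) `X₂` conditionally independent of `(X₁, Z)` given `(U, A)`,
(iii) `Y` conditionally independent of `(U, A)` given `(X₁, X₂)`, one has
`H(Z|U,A) + I(X₁;Y|X₂,Z,U,A) ≤ H(Z|A,X₂) + I(X₁;Y|X₂,Z,A)`. -/
theorem condEnt_add_condMutInf_le_actions
    {U A Z X₁ X₂ Y : Type*}
    [Fintype U] [Fintype A] [Fintype Z] [Fintype X₁] [Fintype X₂] [Fintype Y]
    [Nonempty U] [Nonempty A] [Nonempty Z] [Nonempty X₁] [Nonempty X₂] [Nonempty Y]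
    (p : U × A × Z × X₁ × X₂ × Y → ℝ)
    (hp0 : ∀ ω, 0 ≤ p ω) (hp1 : ∑ ω, p ω = 1)
    (g : A → X₁ → Z)
    (hdet : ∀ ω, p ω ≠ 0 → ω.2.2.1 = g ω.2.1 ω.2.2.2.1)
    (hci1 : CondIndepFun p (fun ω => ω.2.2.2.2.1)
      (fun ω => (ω.2.2.2.1, ω.2.2.1)) (fun ω => (ω.1, ω.2.1)))
    (hci2 : CondIndepFun p (fun ω => ω.2.2.2.2.2)
      (fun ω => (ω.1, ω.2.1)) (fun ω => (ω.2.2.2.1, ω.2.2.2.2.1))) :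
    condEnt p (fun ω => ω.2.2.1) (fun ω => (ω.1, ω.2.1))
        + condMutInf p (fun ω => ω.2.2.2.1) (fun ω => ω.2.2.2.2.2)
            (fun ω => (ω.2.2.2.2.1, ω.2.2.1, ω.1, ω.2.1))
      ≤ condEnt p (fun ω => ω.2.2.1) (fun ω => (ω.2.1, ω.2.2.2.2.1))
        + condMutInf p (fun ω => ω.2.2.2.1) (fun ω => ω.2.2.2.2.2)
            (fun ω => (ω.2.2.2.2.1, ω.2.2.1, ω.2.1)) :=
  condEnt_add_condMutInf_le_actions_general p hp0 g hdet hci1 hci2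
end
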